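/- arXiv:2012.02912 — 4 statements merged into one kernel-verified Lean document; each statement's English description precedes it below -/
import Mathlib

section
/- Let f, g : ℝ → ℝ≥0 be measurable, and suppose there exist s† ≤ s‡ such that f(y) ≥ α·g(y) for all y ≤ s† and for all y ≥ s‡, and ∫_s^S f ≥ α·∫_s^S g whenever s ≤ s† and s† ≤ S ≤ s‡, with ∫_s^S g > 0 for s < S. Then for all s < s̲ ≤ s† and all S > s̲: (∫_s^S f(max(y, s̲)) dy) / (∫_s^S g(max(y, s̲)) dy) ≥ α. -/
open Filter Set MeasureTheory intervalIntegral

/-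
Truncating at `s̲` replaces `f` by the constant `f s̲` on `[s, s̲]`, so numerator and denominator
split as `(s̲ - s) f(s̲) + ∫_{s̲}^S f` and `(s̲ - s) g(s̲) + ∫_{s̲}^S g`. The first summands compare
since `s̲ ≤ s†`. For the second, `∫_{s̲}^S f ≥ α ∫_{s̲}^S g` follows pointwise if `S ≤ s†`, from the
hypothesis on the middle range if `s† ≤ S ≤ s‡`, and by splitting at `s‡` if `S > s‡`.
The ratio of two sums dominated termwise by `α` is then at least `α`.
-/

theorem MeasureTheory.LocallyIntegrable.intervalIntegrable {f : ℝ → ℝ} (hf : LocallyIntegrable f)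
    (a b : ℝ) : IntervalIntegrable f volume a b :=
  intervalIntegrable_iff.2 <| (hf.integrableOn_isCompact isCompact_uIcc).mono_set uIoc_subset_uIcc

theorem integral_comp_max {f : ℝ → ℝ} (hf : LocallyIntegrable f) {s c S : ℝ}
    (hsc : s ≤ c) (hcS : c ≤ S) :
    ∫ y in s..S, f (max y c) = (c - s) * f c + ∫ y in c..S, f y := by
  have h_left : EqOn (fun y => f (max y c)) (fun _ => f c) (uIcc s c) := fun y hy => by
    rw [uIcc_of_le hsc] at hy
    simp only [max_eq_right hy.2]
  have h_right : EqOn (fun y => f (max y c)) f (uIcc c S) := fun y hy => by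
    rw [uIcc_of_le hcS] at hy
    simp only [max_eq_left hy.1]
  have hi_left : IntervalIntegrable (fun y => f (max y c)) volume s c :=
    (intervalIntegrable_congr (h_left.mono uIoc_subset_uIcc)).2 intervalIntegrable_const
  have hi_right : IntervalIntegrable (fun y => f (max y c)) volume c S :=
    (intervalIntegrable_congr (h_right.mono uIoc_subset_uIcc)).2 (hf.intervalIntegrable c S)
  rw [← integral_add_adjacent_intervals hi_left hi_right, integral_congr h_left,
    integral_congr h_right, intervalIntegral.integral_const, smul_eq_mul]

theorem mul_integral_le_integral_of_forall_mem_Icc {f g : ℝ → ℝ} {α a b : ℝ}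
    (hf : LocallyIntegrable f) (hg : LocallyIntegrable g) (hab : a ≤ b)
    (h : ∀ y ∈ Icc a b, α * g y ≤ f y) :
    α * ∫ y in a..b, g y ≤ ∫ y in a..b, f y := by
  rw [← intervalIntegral.integral_const_mul]
  exact integral_mono_on hab ((hg.intervalIntegrable a b).const_mul α) (hf.intervalIntegrable a b) h

theorem mul_integral_le_integral_of_le_outside_of_le_across {f g : ℝ → ℝ} {α p q : ℝ}
    (hf : LocallyIntegrable f) (hg : LocallyIntegrable g) (hpq : p ≤ q)
    (h_left : ∀ y ≤ p, α * g y ≤ f y) (h_right : ∀ y ≥ q, α * g y ≤ f y)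
    (h_across : ∀ a b, a ≤ p → p ≤ b → b ≤ q → α * ∫ y in a..b, g y ≤ ∫ y in a..b, f y)
    {a b : ℝ} (hap : a ≤ p) (hab : a ≤ b) :
    α * ∫ y in a..b, g y ≤ ∫ y in a..b, f y := by
  rcases le_total b p with hbp | hpb
  · exact mul_integral_le_integral_of_forall_mem_Icc hf hg hab fun y hy => h_left y (hy.2.trans hbp)
  rcases le_total b q with hbq | hqb
  · exact h_across a b hap hpb hbq
  have h_aq := h_across a q hap hpq le_rfl
  have h_qb := mul_integral_le_integral_of_forall_mem_Icc hf hg hqb fun y hy => h_right y hy.1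
  rw [← integral_add_adjacent_intervals (hf.intervalIntegrable a q) (hf.intervalIntegrable q b),
    ← integral_add_adjacent_intervals (hg.intervalIntegrable a q) (hg.intervalIntegrable q b),
    mul_add]
  exact add_le_add h_aq h_qb

theorem le_add_div_add_of_mul_le {α x y x' y' : ℝ} (h : α * x ≤ y) (h' : α * x' ≤ y')
    (hpos : 0 < x + x') : α ≤ (y + y') / (x + x') := by
  rw [le_div_iff₀ hpos]
  linarith

theorem truncated_ratio_lower_bound_general
    (f g : ℝ → ℝ) (α : ℝ)
    (hgnn : ∀ y, 0 ≤ g y)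
    (hfint : LocallyIntegrable f) (hgint : LocallyIntegrable g)
    (sdag sddag : ℝ) (hss : sdag ≤ sddag)
    (hleft : ∀ y ≤ sdag, α * g y ≤ f y)
    (hright : ∀ y ≥ sddag, α * g y ≤ f y)
    (hmid : ∀ s S : ℝ, s ≤ sdag → sdag ≤ S → S ≤ sddag →
      α * (∫ y in s..S, g y) ≤ ∫ y in s..S, f y)
    (hgpos : ∀ s S : ℝ, s < S → 0 < ∫ y in s..S, g y) :
    ∀ s sl : ℝ, s < sl → sl ≤ sdag → ∀ S : ℝ, sl < S →
      α ≤ (∫ y in s..S, f (max y sl)) / (∫ y in s..S, g (max y sl)) := by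
  intro s sl hs hsl S hS
  rw [integral_comp_max hfint hs.le hS.le, integral_comp_max hgint hs.le hS.le]
  have hlen : 0 ≤ sl - s := sub_nonneg.2 hs.le
  refine le_add_div_add_of_mul_le ?_ ?_ ?_
  · rw [mul_left_comm]
    exact mul_le_mul_of_nonneg_left (hleft sl hsl) hlen
  · exact mul_integral_le_integral_of_le_outside_of_le_across hfint hgint hss hleft hright hmid
      hsl hS.le
  · exact add_pos_of_nonneg_of_pos (mul_nonneg hlen (hgnn sl)) (hgpos sl S hS)

/-- Case analysis verifying the modified average-cost lower bound:
if `f ≥ α·g` to the left of `s†` and to the right of `s‡`, and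
`∫_s^S f ≥ α ∫_s^S g` for `s ≤ s†` and `s† ≤ S ≤ s‡`, then the truncated
ratio `(∫_s^S f(max(y,s̲)))/(∫_s^S g(max(y,s̲)))` is at least `α` for all
`s < s̲ ≤ s†` and `S > s̲`. -/
theorem truncated_ratio_lower_bound
    (f g : ℝ → ℝ) (α : ℝ)
    (hfm : Measurable f) (hgm : Measurable g)
    (hfnn : ∀ y, 0 ≤ f y) (hgnn : ∀ y, 0 ≤ g y)
    (hfint : LocallyIntegrable f) (hgint : LocallyIntegrable g)
    (sdag sddag : ℝ) (hss : sdag ≤ sddag)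
    (hleft : ∀ y ≤ sdag, α * g y ≤ f y)
    (hright : ∀ y ≥ sddag, α * g y ≤ f y)
    (hmid : ∀ s S : ℝ, s ≤ sdag → sdag ≤ S → S ≤ sddag →
      α * (∫ y in s..S, g y) ≤ ∫ y in s..S, f y)
    (hgpos : ∀ s S : ℝ, s < S → 0 < ∫ y in s..S, g y) :
    ∀ s sl : ℝ, s < sl → sl ≤ sdag → ∀ S : ℝ, sl < S →
      α ≤ (∫ y in s..S, f (max y sl)) / (∫ y in s..S, g (max y sl)) :=
  truncated_ratio_lower_bound_general f g α hgnn hfint hgint sdag sddag hss hleft hright hmid hgpos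
end

section
/- Suppose μ, σ : ℝ → ℝ are continuous with 0 < μ̲ ≤ μ ≤ μ̄ < ∞ and 0 < σ̲ ≤ σ ≤ σ̄ < ∞, and h : ℝ → [0,∞) is continuous, polynomially bounded, and h(z) → ∞ as z → ∞. Define g(z) := 2∫_z^∞ (h(u)/σ(u)²)·exp(−∫_z^u 2μ(y)/σ(y)² dy) du. Then lim_{z→∞} g(z) = ∞. -/
open Filter Set MeasureTheory intervalIntegral Asymptotics

/-! With `φ = 2μ/σ²` pinched between two positive constants `a ≤ φ ≤ c`, the weight
`exp (-∫_z^u φ)` lies between `exp (-c (u - z))` and `exp (-a (u - z))`. The lower bound shows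
that the integral over `(z, z + 1]` alone is at least `e⁻ᶜ · inf_{u ≥ z} h u / σ u²`, which tends
to infinity; the upper bound beats the polynomial growth of `h` and makes the integral over
`(z, ∞)` finite, so that the Bochner integral is not the junk value `0`. -/

section

variable {φ : ℝ → ℝ} {a c z u : ℝ}

lemma mul_sub_le_integral_of_le (hφ : IntervalIntegrable φ volume z u) (hzu : z ≤ u)
    (ha : ∀ y, a ≤ φ y) : a * (u - z) ≤ ∫ y in z..u, φ y := by
  simpa [mul_comm] using integral_mono_on hzu intervalIntegrable_const hφ fun y _ => ha y

lemma integral_le_mul_sub_of_le (hφ : IntervalIntegrable φ volume z u) (hzu : z ≤ u)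
    (hc : ∀ y, φ y ≤ c) : ∫ y in z..u, φ y ≤ c * (u - z) := by
  simpa [mul_comm] using integral_mono_on hzu hφ intervalIntegrable_const fun y _ => hc y

lemma exp_neg_integral_isBigO (hφ : Continuous φ) (ha : ∀ y, a ≤ φ y) (z : ℝ) :
    (fun u => Real.exp (-∫ y in z..u, φ y)) =O[atTop] fun u => Real.exp (-a * u) := by
  refine IsBigO.of_bound (Real.exp (a * z)) ?_
  filter_upwards [eventually_ge_atTop z] with u hu
  rw [Real.norm_of_nonneg (Real.exp_pos _).le, Real.norm_of_nonneg (Real.exp_pos _).le,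
    ← Real.exp_add, Real.exp_le_exp]
  linarith [mul_sub_le_integral_of_le (hφ.intervalIntegrable z u) hu ha]

end

lemma isBigO_exp_mul_of_abs_le_poly {f : ℝ → ℝ} {b₁ b₂ c : ℝ} {n : ℕ}
    (hf : ∀ z, |f z| ≤ b₁ + b₂ * |z| ^ n) (hc : 0 < c) :
    f =O[atTop] fun u => Real.exp (c * u) := by
  have hpoly : (fun u : ℝ => b₁ + b₂ * |u| ^ n) =O[atTop] fun u => Real.exp (c * u) := by
    refine IsBigO.add ?_ ?_
    · simpa using (isLittleO_pow_exp_pos_mul_atTop 0 hc).isBigO.const_mul_left b₁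
    · refine ((isLittleO_pow_exp_pos_mul_atTop n hc).isBigO.const_mul_left b₂).congr' ?_
        EventuallyEq.rfl
      filter_upwards [eventually_ge_atTop 0] with u hu
      rw [abs_of_nonneg hu]
  refine (IsBigO.of_bound 1 (Eventually.of_forall fun u => ?_)).trans hpoly
  simpa [Real.norm_eq_abs] using (hf u).trans (le_abs_self _)

lemma tendsto_div_sq_atTop {f σ : ℝ → ℝ} {σhi : ℝ} (hσ : ∀ u, 0 < σ u ∧ σ u ≤ σhi)
    (hf : Tendsto f atTop atTop) : Tendsto (fun u => f u / σ u ^ 2) atTop atTop := by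
  refine tendsto_atTop_mono' _ ?_ (hf.atTop_div_const (pow_pos ((hσ 0).1.trans_le (hσ 0).2) 2))
  filter_upwards [hf.eventually_ge_atTop 0] with u hu
  exact div_le_div_of_nonneg_left hu (pow_pos (hσ u).1 2) (pow_le_pow_left₀ (hσ u).1.le (hσ u).2 2)

section

variable {φ w : ℝ → ℝ}

lemma integrableOn_Ioi_mul_exp_neg_integral {a b : ℝ} (hφ : Continuous φ) (ha : ∀ y, a ≤ φ y)
    (hw : Continuous w) (hwb : w =O[atTop] fun u => Real.exp (b * u)) (hba : b < a) (z : ℝ) :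
    IntegrableOn (fun u => w u * Real.exp (-∫ y in z..u, φ y)) (Ioi z) := by
  have hF : Continuous fun u => ∫ y in z..u, φ y :=
    continuous_primitive (fun _ _ => hφ.intervalIntegrable _ _) z
  refine integrable_of_isBigO_exp_neg (sub_pos.2 hba) (hw.mul hF.neg.rexp).continuousOn ?_
  refine (hwb.mul (exp_neg_integral_isBigO hφ ha z)).congr' EventuallyEq.rfl
    (Eventually.of_forall fun u => ?_)
  simp only [← Real.exp_add]
  ring_nf

lemma mul_exp_neg_le_setIntegral_Ioi {c m z : ℝ} (hφ : Continuous φ) (hc : ∀ y, φ y ≤ c)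
    (hc₀ : 0 ≤ c) (hm : 0 ≤ m) (hwm : ∀ u, z ≤ u → m ≤ w u)
    (hint : IntegrableOn (fun u => w u * Real.exp (-∫ y in z..u, φ y)) (Ioi z)) :
    m * Real.exp (-c) ≤ ∫ u in Ioi z, w u * Real.exp (-∫ y in z..u, φ y) := by
  have hweight : ∀ u ∈ Ioc z (z + 1), Real.exp (-c) ≤ Real.exp (-∫ y in z..u, φ y) := by
    rintro u ⟨hzu, huz⟩
    rw [Real.exp_le_exp, neg_le_neg_iff]
    calc ∫ y in z..u, φ y ≤ c * (u - z) :=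
          integral_le_mul_sub_of_le (hφ.intervalIntegrable z u) hzu.le hc
      _ ≤ c * 1 := by gcongr; linarith
      _ = c := mul_one c
  have hnonneg : ∀ u ∈ Ioi z, 0 ≤ w u * Real.exp (-∫ y in z..u, φ y) := fun u hu =>
    mul_nonneg (hm.trans (hwm u (le_of_lt hu))) (Real.exp_pos _).le
  calc m * Real.exp (-c) = ∫ _ in Ioc z (z + 1), m * Real.exp (-c) := by
        simp [Real.volume_real_Ioc]
    _ ≤ ∫ u in Ioc z (z + 1), w u * Real.exp (-∫ y in z..u, φ y) :=
        setIntegral_mono_on (integrableOn_const (by simp)) (hint.mono_set Ioc_subset_Ioi_self)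
          measurableSet_Ioc fun u hu =>
          mul_le_mul (hwm u hu.1.le) (hweight u hu) (Real.exp_pos _).le (hm.trans (hwm u hu.1.le))
    _ ≤ ∫ u in Ioi z, w u * Real.exp (-∫ y in z..u, φ y) :=
        setIntegral_mono_set hint (ae_restrict_of_forall_mem measurableSet_Ioi hnonneg)
          Ioc_subset_Ioi_self.eventuallyLE

theorem tendsto_setIntegral_Ioi_mul_exp_neg_integral {c : ℝ} (hφ : Continuous φ)
    (hc : ∀ y, φ y ≤ c) (hw : Tendsto w atTop atTop)
    (hint : ∀ z, IntegrableOn (fun u => w u * Real.exp (-∫ y in z..u, φ y)) (Ioi z)) :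
    Tendsto (fun z => ∫ u in Ioi z, w u * Real.exp (-∫ y in z..u, φ y)) atTop atTop := by
  refine tendsto_atTop.2 fun C => ?_
  obtain ⟨z₀, hz₀⟩ :=
    (hw.eventually_ge_atTop (max C 0 * Real.exp (max c 0))).exists_forall_of_atTop
  filter_upwards [eventually_ge_atTop z₀] with z hz
  calc C ≤ max C 0 * Real.exp (max c 0) * Real.exp (-max c 0) := by
        rw [mul_assoc, ← Real.exp_add, add_neg_cancel, Real.exp_zero, mul_one]
        exact le_max_left _ _
    _ ≤ _ := mul_exp_neg_le_setIntegral_Ioi hφ (fun y => (hc y).trans (le_max_left _ _))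
        (le_max_right _ _) (by positivity) (fun u hu => hz₀ u (hz.trans hu)) (hint z)

end

theorem g_diverges_at_top_general
    (μ σ : ℝ → ℝ) (hμc : Continuous μ) (hσc : Continuous σ)
    (μlo μhi σlo σhi : ℝ)
    (hμlo : 0 < μlo) (hμ : ∀ z, μlo ≤ μ z ∧ μ z ≤ μhi)
    (hσlo : 0 < σlo) (hσ : ∀ z, σlo ≤ σ z ∧ σ z ≤ σhi)
    (h : ℝ → ℝ) (hhc : Continuous h)
    (hpoly : ∃ b₁ b₂ : ℝ, ∃ n : ℕ, ∀ z, |h z| ≤ b₁ + b₂ * |z| ^ n)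
    (hhtop : Tendsto h atTop atTop) :
    Tendsto (fun z : ℝ =>
        2 * ∫ u in Set.Ioi z,
          (h u / (σ u) ^ 2) * Real.exp (-(∫ y in z..u, 2 * μ y / (σ y) ^ 2)))
      atTop atTop := by
  obtain ⟨b₁, b₂, n, hb⟩ := hpoly
  have hσpos : ∀ y, 0 < σ y := fun y => hσlo.trans_le (hσ y).1
  have hσhi : 0 < σhi := (hσpos 0).trans_le (hσ 0).2
  have hσsq_ne : ∀ y, σ y ^ 2 ≠ 0 := fun y => (pow_pos (hσpos y) 2).ne'
  have hφ : Continuous fun y => 2 * μ y / σ y ^ 2 :=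
    (continuous_const.mul hμc).div (hσc.pow 2) hσsq_ne
  have hφ_ge : ∀ y, 2 * μlo / σhi ^ 2 ≤ 2 * μ y / σ y ^ 2 := fun y =>
    div_le_div₀ (by linarith [(hμ y).1]) (by linarith [(hμ y).1]) (pow_pos (hσpos y) 2)
      (pow_le_pow_left₀ (hσpos y).le (hσ y).2 2)
  have hφ_le : ∀ y, 2 * μ y / σ y ^ 2 ≤ 2 * μhi / σlo ^ 2 := fun y =>
    div_le_div₀ (by linarith [hμlo.trans_le ((hμ y).1.trans (hμ y).2)]) (by linarith [(hμ y).2])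
      (pow_pos hσlo 2) (pow_le_pow_left₀ hσlo.le (hσ y).1 2)
  have hw_growth : (fun u => h u / σ u ^ 2) =O[atTop] fun u => Real.exp (μlo / σhi ^ 2 * u) := by
    refine (IsBigO.of_bound (1 / σlo ^ 2) (Eventually.of_forall fun u => ?_)).trans
      (isBigO_exp_mul_of_abs_le_poly hb (by positivity))
    rw [norm_div, norm_pow, Real.norm_of_nonneg (hσpos u).le, div_eq_mul_one_div, mul_comm]
    gcongr
    exact (hσ u).1
  refine (tendsto_setIntegral_Ioi_mul_exp_neg_integral hφ hφ_le
    (tendsto_div_sq_atTop (fun u => ⟨hσpos u, (hσ u).2⟩) hhtop) fun z => ?_).const_mul_atTop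
    two_pos
  exact integrableOn_Ioi_mul_exp_neg_integral hφ hφ_ge (hhc.div (hσc.pow 2) hσsq_ne) hw_growth
    (by rw [mul_div_assoc]; linarith [div_pos hμlo (pow_pos hσhi 2)]) z

/-- `g(z) = 2∫_z^∞ (h(u)/σ(u)²) exp(−∫_z^u 2μ/σ²) du` diverges as `z → ∞`
when `h` is continuous, polynomially bounded, and `h(z) → ∞` at `+∞`. -/
theorem g_diverges_at_top
    (μ σ : ℝ → ℝ) (hμc : Continuous μ) (hσc : Continuous σ)
    (μlo μhi σlo σhi : ℝ)
    (hμlo : 0 < μlo) (hμ : ∀ z, μlo ≤ μ z ∧ μ z ≤ μhi)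
    (hσlo : 0 < σlo) (hσ : ∀ z, σlo ≤ σ z ∧ σ z ≤ σhi)
    (h : ℝ → ℝ) (hhc : Continuous h) (hhnn : ∀ z, 0 ≤ h z)
    (hpoly : ∃ b₁ b₂ : ℝ, ∃ n : ℕ, ∀ z, |h z| ≤ b₁ + b₂ * |z| ^ n)
    (hhtop : Tendsto h atTop atTop) :
    Tendsto (fun z : ℝ =>
        2 * ∫ u in Set.Ioi z,
          (h u / (σ u) ^ 2) * Real.exp (-(∫ y in z..u, 2 * μ y / (σ y) ^ 2)))
      atTop atTop :=
  g_diverges_at_top_general μ σ hμc hσc μlo μhi σlo σhi hμlo hμ hσlo hσ h hhc hpoly hhtop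
end

section
/- Suppose μ, σ : ℝ → ℝ are continuous with 0 < μ̲ ≤ μ ≤ μ̄ < ∞ and 0 < σ̲ ≤ σ ≤ σ̄ < ∞, and h : ℝ → [0,∞) is continuous and polynomially bounded with h(y) → ∞ as y → ∞. With g, ℓ as above, lim_{z→+∞} g(z)/ℓ(z) = lim_{y→∞} h(y) = ∞. -/
/-!
For fixed `z` the weight `u ↦ σ(u)⁻² exp(-∫_z^u 2μ/σ²)` on `(z, ∞)` is positive and decays like
`exp(-c u)` with `c = 2μ̲/σ̄² > 0`, so it and its product with the polynomially bounded `h` are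
integrable. The ratio `g(z)/ℓ(z)` is then an average of `h` over `(z, ∞)` against a positive
weight, hence at least `inf_{u > z} h(u)`, which tends to `∞`.
-/

open Filter Set MeasureTheory intervalIntegral Asymptotics Real

lemma isBigO_exp_mul_atTop_of_abs_le {h : ℝ → ℝ} {b₁ b₂ ε : ℝ} {n : ℕ} (hε : 0 < ε)
    (hh : ∀ u, |h u| ≤ b₁ + b₂ * |u| ^ n) : h =O[atTop] fun u => exp (ε * u) := by
  have hpow (k : ℕ) : (fun u : ℝ => |u| ^ k) =O[atTop] fun u => exp (ε * u) :=
    (isLittleO_pow_exp_pos_mul_atTop k hε).isBigO.congr'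
      (by filter_upwards [eventually_ge_atTop 0] with u hu; rw [abs_of_nonneg hu]) .rfl
  have hbound : (fun u => b₁ + b₂ * |u| ^ n) =O[atTop] fun u => exp (ε * u) := by
    simpa using ((hpow 0).const_mul_left b₁).add ((hpow n).const_mul_left b₂)
  exact (isBigO_of_le _ fun u => (hh u).trans (le_abs_self _)).trans hbound

lemma isBigO_one_div_sq_of_le {α : Type*} {l : Filter α} {σ : α → ℝ} {a : ℝ} (ha : 0 < a)
    (hσ : ∀ x, a ≤ σ x) : (fun x => 1 / σ x ^ 2) =O[l] fun _ => (1 : ℝ) :=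
  isBigO_of_le' (c := 1 / a ^ 2) _ fun x => by
    have hσx : 0 < σ x := ha.trans_le (hσ x)
    rw [norm_one, mul_one, norm_of_nonneg (by positivity)]
    exact one_div_le_one_div_of_le (by positivity) (pow_le_pow_left₀ ha.le (hσ x) 2)

lemma exp_neg_integral_le {q : ℝ → ℝ} {c z u : ℝ} (hq : IntervalIntegrable q volume z u)
    (hcq : ∀ y, c ≤ q y) (hzu : z ≤ u) :
    exp (-∫ y in z..u, q y) ≤ exp (c * z) * exp (-c * u) := by
  have hmono : c * (u - z) ≤ ∫ y in z..u, q y := by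
    simpa [mul_comm] using integral_mono_on hzu intervalIntegrable_const hq fun y _ => hcq y
  rw [← exp_add, exp_le_exp]
  linarith

lemma isBigO_exp_neg_integral {q : ℝ → ℝ} {c : ℝ} (hq : ∀ a b, IntervalIntegrable q volume a b)
    (hcq : ∀ y, c ≤ q y) (z : ℝ) :
    (fun u => exp (-∫ y in z..u, q y)) =O[atTop] fun u => exp (-c * u) :=
  IsBigO.of_bound (exp (c * z)) <| by
    filter_upwards [eventually_ge_atTop z] with u hzu
    simpa only [norm_of_nonneg (exp_pos _).le] using exp_neg_integral_le (hq z u) hcq hzu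

lemma integrableOn_Ioi_mul_exp_neg_integral_s7 {q g : ℝ → ℝ} {c ε : ℝ} (hq : Continuous q)
    (hcq : ∀ y, c ≤ q y) (hεc : ε < c) (hg : Continuous g)
    (hgO : g =O[atTop] fun u => exp (ε * u)) (z : ℝ) :
    IntegrableOn (fun u => g u * exp (-∫ y in z..u, q y)) (Ioi z) := by
  have hq_int (a b : ℝ) : IntervalIntegrable q volume a b := hq.intervalIntegrable a b
  refine integrable_of_isBigO_exp_neg (sub_pos.2 hεc) ?_
    ((hgO.mul (isBigO_exp_neg_integral hq_int hcq z)).congr_right fun u => ?_)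
  · exact (hg.mul (continuous_exp.comp (continuous_primitive hq_int z).neg)).continuousOn
  · rw [← exp_add]; ring_nf

lemma le_setIntegral_mul_div_setIntegral {X : Type*} [MeasurableSpace X] {μ : Measure X}
    {s : Set X} {f w : X → ℝ} {C : ℝ} (hs : MeasurableSet s) (hμs : μ s ≠ 0)
    (hw : IntegrableOn w s μ) (hfw : IntegrableOn (fun x => f x * w x) s μ)
    (hw_pos : ∀ x ∈ s, 0 < w x) (hC : ∀ x ∈ s, C ≤ f x) :
    C ≤ (∫ x in s, f x * w x ∂μ) / ∫ x in s, w x ∂μ := by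
  have hpos : 0 < ∫ x in s, w x ∂μ := by
    have hw_nonneg : 0 ≤ᵐ[μ.restrict s] w :=
      (ae_restrict_iff' hs).2 <| .of_forall fun x hx => (hw_pos x hx).le
    rw [setIntegral_pos_iff_support_of_nonneg_ae hw_nonneg hw]
    have hsupp : Function.support w ∩ s = s := inter_eq_right.2 fun x hx => (hw_pos x hx).ne'
    rwa [hsupp, pos_iff_ne_zero]
  rw [le_div_iff₀ hpos, ← MeasureTheory.integral_const_mul]
  exact setIntegral_mono_on (hw.const_mul C) hfw hs fun x hx =>
    mul_le_mul_of_nonneg_right (hC x hx) (hw_pos x hx).le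

theorem tendsto_setIntegral_Ioi_mul_div_atTop {f : ℝ → ℝ} {w : ℝ → ℝ → ℝ}
    (hf : Tendsto f atTop atTop) (hw : ∀ z, IntegrableOn (w z) (Ioi z))
    (hfw : ∀ z, IntegrableOn (fun u => f u * w z u) (Ioi z)) (hw_pos : ∀ z u, z < u → 0 < w z u) :
    Tendsto (fun z => (∫ u in Ioi z, f u * w z u) / ∫ u in Ioi z, w z u) atTop atTop := by
  refine tendsto_atTop.2 fun C => ?_
  obtain ⟨Z, hZ⟩ := (tendsto_atTop.1 hf C).exists_forall_of_atTop
  filter_upwards [eventually_ge_atTop Z] with z hz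
  exact le_setIntegral_mul_div_setIntegral measurableSet_Ioi (by simp) (hw z) (hfw z)
    (hw_pos z) fun u hu => hZ u (hz.trans (le_of_lt hu))

theorem ratio_diverges_at_top_general
    (μ σ : ℝ → ℝ) (hμc : Continuous μ) (hσc : Continuous σ)
    (μlo μhi σlo σhi : ℝ)
    (hμlo : 0 < μlo) (hμ : ∀ z, μlo ≤ μ z ∧ μ z ≤ μhi)
    (hσlo : 0 < σlo) (hσ : ∀ z, σlo ≤ σ z ∧ σ z ≤ σhi)
    (h : ℝ → ℝ) (hhc : Continuous h)
    (hpoly : ∃ b₁ b₂ : ℝ, ∃ n : ℕ, ∀ z, |h z| ≤ b₁ + b₂ * |z| ^ n)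
    (hhtop : Tendsto h atTop atTop) :
    Tendsto (fun z : ℝ =>
        (2 * ∫ u in Set.Ioi z,
          (h u / (σ u) ^ 2) * Real.exp (-(∫ y in z..u, 2 * μ y / (σ y) ^ 2))) /
        (2 * ∫ u in Set.Ioi z,
          (1 / (σ u) ^ 2) * Real.exp (-(∫ y in z..u, 2 * μ y / (σ y) ^ 2))))
      atTop atTop := by
  obtain ⟨b₁, b₂, n, hpoly⟩ := hpoly
  have hσpos (y : ℝ) : 0 < σ y := hσlo.trans_le (hσ y).1
  have hσ2 (y : ℝ) : σ y ^ 2 ≠ 0 := pow_ne_zero 2 (hσpos y).ne'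
  have hc : 0 < 2 * μlo / σhi ^ 2 := by
    have : 0 < σhi := (hσpos 0).trans_le (hσ 0).2
    positivity
  have hcq (y : ℝ) : 2 * μlo / σhi ^ 2 ≤ 2 * μ y / σ y ^ 2 :=
    div_le_div₀ (by linarith [(hμ y).1]) (by linarith [(hμ y).1]) (pow_pos (hσpos y) 2)
      (pow_le_pow_left₀ (hσpos y).le (hσ y).2 2)
  have hq : Continuous fun y => 2 * μ y / σ y ^ 2 :=
    (continuous_const.mul hμc).div (hσc.pow 2) hσ2
  have hinvσ := isBigO_one_div_sq_of_le (l := atTop) hσlo fun u => (hσ u).1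
  have hw := integrableOn_Ioi_mul_exp_neg_integral_s7 (g := fun u => 1 / σ u ^ 2) hq hcq hc
    (continuous_const.div (hσc.pow 2) hσ2) (hinvσ.congr_right fun u => by simp)
  have hhw (z : ℝ) : IntegrableOn (fun u => h u * (1 / σ u ^ 2 *
      exp (-∫ y in z..u, 2 * μ y / σ y ^ 2))) (Ioi z) :=
    (integrableOn_Ioi_mul_exp_neg_integral_s7 (g := fun u => h u / σ u ^ 2) hq hcq (half_lt_self hc)
      (hhc.div (hσc.pow 2) hσ2) (((isBigO_exp_mul_atTop_of_abs_le (half_pos hc) hpoly).mul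
        hinvσ).congr (fun u => by ring) fun u => mul_one _) z).congr_fun (fun u _ => by ring)
      measurableSet_Ioi
  have hw_pos (z u : ℝ) (_ : z < u) :
      0 < 1 / σ u ^ 2 * exp (-∫ y in z..u, 2 * μ y / σ y ^ 2) :=
    mul_pos (one_div_pos.2 (pow_pos (hσpos u) 2)) (exp_pos _)
  refine (tendsto_setIntegral_Ioi_mul_div_atTop hhtop hw hhw hw_pos).congr fun z => ?_
  simp only [mul_div_mul_left _ _ (two_ne_zero' ℝ), div_mul_eq_mul_div, one_mul, mul_div_assoc]

/-- The ratio `g(z)/ℓ(z)` diverges as `z → +∞` when `h(y) → ∞` as `y → ∞`. -/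
theorem ratio_diverges_at_top
    (μ σ : ℝ → ℝ) (hμc : Continuous μ) (hσc : Continuous σ)
    (μlo μhi σlo σhi : ℝ)
    (hμlo : 0 < μlo) (hμ : ∀ z, μlo ≤ μ z ∧ μ z ≤ μhi)
    (hσlo : 0 < σlo) (hσ : ∀ z, σlo ≤ σ z ∧ σ z ≤ σhi)
    (h : ℝ → ℝ) (hhc : Continuous h) (hhnn : ∀ z, 0 ≤ h z)
    (hpoly : ∃ b₁ b₂ : ℝ, ∃ n : ℕ, ∀ z, |h z| ≤ b₁ + b₂ * |z| ^ n)
    (hhtop : Tendsto h atTop atTop) :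
    Tendsto (fun z : ℝ =>
        (2 * ∫ u in Set.Ioi z,
          (h u / (σ u) ^ 2) * Real.exp (-(∫ y in z..u, 2 * μ y / (σ y) ^ 2))) /
        (2 * ∫ u in Set.Ioi z,
          (1 / (σ u) ^ 2) * Real.exp (-(∫ y in z..u, 2 * μ y / (σ y) ^ 2))))
      atTop atTop :=
  ratio_diverges_at_top_general μ σ hμc hσc μlo μhi σlo σhi hμlo hμ hσlo hσ h hhc hpoly hhtop
end

section
/- Suppose h : ℝ → [0,∞) is polynomially bounded, μ bounded with μ ≥ μ̲ > 0, σ bounded with σ̲ ≤ σ ≤ σ̄. Define Λ₂(z) := ((h(z) − α⋆)/μ(z))·∫_{z₀−z}^∞ (2μ(y+z)/σ(y+z)²)·exp(−∫_z^{y+z} 2μ/σ²) dy for z < z₀. Then lim_{z→−∞} Λ₂(z) = 0. -/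
/-! With `c = 2μ̲/σ̄²` and `C = 2μ̄/σ̲²` we have `c ≤ 2μ/σ² ≤ C`, so the inner integral over `[z, y + z]`
is at least `c y` and the integrand of the tail integral is at most `C exp(-c y)`. Hence the tail
integral over `(z₀ - z, ∞)` is at most `(C/c) exp(-c (z₀ - z))`, and this exponential decay beats
the polynomial growth of the prefactor `(h z - α⋆)/μ z` as `z → -∞`. -/

open Filter Set MeasureTheory intervalIntegral Real

lemma integral_Ioi_mul_exp_neg_integral_le {f : ℝ → ℝ} {c C : ℝ} (hf : Continuous f)
    (hc : 0 < c) (hfc : ∀ u, c ≤ f u) (hfC : ∀ u, f u ≤ C) (z : ℝ) {a : ℝ} (ha : 0 ≤ a) :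
    |∫ y in Ioi a, f (y + z) * exp (-∫ u in z..y + z, f u)| ≤ C / c * exp (-c * a) := by
  have hC : 0 ≤ C := hc.le.trans ((hfc 0).trans (hfC 0))
  have hnonneg : ∀ y, 0 ≤ f (y + z) * exp (-∫ u in z..y + z, f u) := fun y =>
    mul_nonneg (hc.le.trans (hfc _)) (exp_pos _).le
  have hpointwise : ∀ y ∈ Ioi a,
      f (y + z) * exp (-∫ u in z..y + z, f u) ≤ C * exp (-c * y) := by
    intro y hy
    have hlower : c * y ≤ ∫ u in z..y + z, f u := by
      have := integral_mono_on (a := z) (b := y + z) (by linarith [mem_Ioi.1 hy])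
        (intervalIntegrable_const (μ := volume)) (hf.intervalIntegrable _ _) fun u _ => hfc u
      rwa [intervalIntegral.integral_const, smul_eq_mul, add_sub_cancel_right, mul_comm] at this
    exact mul_le_mul (hfC _) (exp_le_exp.2 (by linarith)) (exp_pos _).le hC
  rw [abs_of_nonneg (setIntegral_nonneg measurableSet_Ioi fun y _ => hnonneg y)]
  calc _ ≤ ∫ y in Ioi a, C * exp (-c * y) :=
        integral_mono_of_nonneg (.of_forall hnonneg)
          ((exp_neg_integrableOn_Ioi a hc).const_mul C)
          (ae_restrict_of_forall_mem measurableSet_Ioi hpointwise)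
    _ = C / c * exp (-c * a) := by
        rw [MeasureTheory.integral_const_mul, integral_exp_mul_Ioi (neg_neg_of_pos hc)]
        field_simp

lemma tendsto_atBot_of_abs_le_poly_mul_exp {F : ℝ → ℝ} {b₁ b₂ c : ℝ} {n : ℕ} (hc : 0 < c)
    (hF : ∀ᶠ z in atBot, |F z| ≤ (b₁ + b₂ * |z| ^ n) * exp (c * z)) :
    Tendsto F atBot (nhds 0) := by
  have hexp : Tendsto (fun z => exp (c * z)) atBot (nhds 0) :=
    tendsto_exp_atBot.comp (tendsto_id.const_mul_atBot hc)
  have hpow : Tendsto (fun z => |z| ^ n * exp (c * z)) atBot (nhds 0) := by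
    rw [← tendsto_comp_neg_atTop_iff]
    refine (tendsto_rpow_mul_exp_neg_mul_atTop_nhds_zero n c hc).congr' ?_
    filter_upwards [eventually_ge_atTop 0] with t ht
    simp [abs_of_nonneg ht]
  refine squeeze_zero_norm' hF ?_
  simpa [add_mul, mul_assoc] using (hexp.const_mul b₁).add (hpow.const_mul b₂)

theorem lambda2_vanishes_general
    (μ σ : ℝ → ℝ) (hμc : Continuous μ) (hσc : Continuous σ)
    (μlo μhi σlo σhi : ℝ)
    (hμlo : 0 < μlo) (hμ : ∀ z, μlo ≤ μ z ∧ μ z ≤ μhi)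
    (hσlo : 0 < σlo) (hσ : ∀ z, σlo ≤ σ z ∧ σ z ≤ σhi)
    (h : ℝ → ℝ)
    (hpoly : ∃ b₁ b₂ : ℝ, ∃ n : ℕ, ∀ z, |h z| ≤ b₁ + b₂ * |z| ^ n)
    (αstar : ℝ) (z₀ : ℝ) :
    Tendsto (fun z : ℝ =>
        ((h z - αstar) / μ z) *
          ∫ y in Set.Ioi (z₀ - z),
            (2 * μ (y + z) / (σ (y + z)) ^ 2) *
              Real.exp (-(∫ u in z..(y + z), 2 * μ u / (σ u) ^ 2)))
      atBot (nhds 0) := by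
  obtain ⟨b₁, b₂, n, hb⟩ := hpoly
  have hσpos : ∀ u, 0 < σ u := fun u => hσlo.trans_le (hσ u).1
  have hσhi : 0 < σhi := (hσpos 0).trans_le (hσ 0).2
  have hf : Continuous fun u => 2 * μ u / σ u ^ 2 :=
    (continuous_const.mul hμc).div (hσc.pow 2) fun u => (pow_pos (hσpos u) 2).ne'
  obtain ⟨c, C, hc, hfc, hfC⟩ : ∃ c C, 0 < c ∧ (∀ u, c ≤ 2 * μ u / σ u ^ 2) ∧
      ∀ u, 2 * μ u / σ u ^ 2 ≤ C :=
    ⟨2 * μlo / σhi ^ 2, 2 * μhi / σlo ^ 2, by positivity,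
      fun u => div_le_div₀ (by linarith [(hμ u).1]) (by linarith [(hμ u).1])
        (by positivity [hσpos u]) (pow_le_pow_left₀ (hσpos u).le (hσ u).2 2),
      fun u => div_le_div₀ (by linarith [(hμ u).1, (hμ u).2]) (by linarith [(hμ u).2])
        (by positivity) (pow_le_pow_left₀ hσlo.le (hσ u).1 2)⟩
  set K := C / c * exp (-c * z₀) / μlo
  refine tendsto_atBot_of_abs_le_poly_mul_exp
    (b₁ := K * (b₁ + |αstar|)) (b₂ := K * b₂) (n := n) hc ?_
  filter_upwards [eventually_le_atBot z₀] with z hz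
  have hI := integral_Ioi_mul_exp_neg_integral_le hf hc hfc hfC z (sub_nonneg.2 hz)
  have hnum : |h z - αstar| ≤ b₁ + |αstar| + b₂ * |z| ^ n :=
    (abs_sub _ _).trans (by linarith [hb z])
  have hP : 0 ≤ b₁ + |αstar| + b₂ * |z| ^ n := (abs_nonneg _).trans hnum
  rw [abs_mul, abs_div, abs_of_pos (hμlo.trans_le (hμ z).1)]
  calc _ ≤ (b₁ + |αstar| + b₂ * |z| ^ n) / μlo * (C / c * exp (-c * (z₀ - z))) := by
        gcongr
        exact (hμ z).1
    _ = _ := by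
        rw [show -c * (z₀ - z) = -c * z₀ + c * z by ring, exp_add]
        ring

/-- The term `Λ₂(z)` tends to `0` as `z → −∞`. -/
theorem lambda2_vanishes
    (μ σ : ℝ → ℝ) (hμc : Continuous μ) (hσc : Continuous σ)
    (μlo μhi σlo σhi : ℝ)
    (hμlo : 0 < μlo) (hμ : ∀ z, μlo ≤ μ z ∧ μ z ≤ μhi)
    (hσlo : 0 < σlo) (hσ : ∀ z, σlo ≤ σ z ∧ σ z ≤ σhi)
    (h : ℝ → ℝ) (hhnn : ∀ z, 0 ≤ h z)
    (hpoly : ∃ b₁ b₂ : ℝ, ∃ n : ℕ, ∀ z, |h z| ≤ b₁ + b₂ * |z| ^ n)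
    (αstar : ℝ) (z₀ : ℝ) :
    Tendsto (fun z : ℝ =>
        ((h z - αstar) / μ z) *
          ∫ y in Set.Ioi (z₀ - z),
            (2 * μ (y + z) / (σ (y + z)) ^ 2) *
              Real.exp (-(∫ u in z..(y + z), 2 * μ u / (σ u) ^ 2)))
      atBot (nhds 0) :=
  lambda2_vanishes_general μ σ hμc hσc μlo μhi σlo σhi hμlo hμ hσlo hσ h hpoly αstar z₀
end
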